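/- The number of labeled spanning trees of the complete graph on n vertices (n ≥ 1) equals n^{n−2}. -/

import Mathlib

open scoped Classical
set_option linter.unusedSectionVars false

namespace Cayley

open SimpleGraph

variable {V : Type*} [Fintype V] [DecidableEq V]

/-- `T` is a tree with support `s`: all edges lie inside `s`, it is acyclic,
and all vertices of `s` are mutually reachable. -/
def IsTreeOn (s : Finset V) (T : SimpleGraph V) : Prop :=
  (∀ ⦃v w : V⦄, T.Adj v w → v ∈ s) ∧ T.IsAcyclic ∧ ∀ v ∈ s, ∀ w ∈ s, T.Reachable v w

def IsLeaf (T : SimpleGraph V) (l : V) : Prop := ∃ b, T.neighborSet l = {b}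

lemma IsTreeOn.mem_of_adj {s : Finset V} {T : SimpleGraph V} (h : IsTreeOn s T)
    {v w : V} (ha : T.Adj v w) : v ∈ s := h.1 ha

lemma IsTreeOn.mem_of_adj' {s : Finset V} {T : SimpleGraph V} (h : IsTreeOn s T)
    {v w : V} (ha : T.Adj v w) : w ∈ s := h.1 ha.symm

lemma IsTreeOn.exists_adj {s : Finset V} {T : SimpleGraph V} (ht : IsTreeOn s T)
    (hs : 2 ≤ s.card) {v : V} (hv : v ∈ s) : ∃ x, T.Adj v x := by
  obtain ⟨w, hw, hwv⟩ := Finset.exists_mem_ne (s := s) (by omega) v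
  obtain ⟨p⟩ := ht.2.2 v hv w hw
  cases p with
  | nil => exact absurd rfl hwv.symm
  | cons h q => exact ⟨_, h⟩

/-- Any walk to `w` with distinct endpoints contains an edge at `w`. -/
lemma exists_last_edge {T : SimpleGraph V} {v w : V} (p : T.Walk v w) (hne : v ≠ w) :
    ∃ u, T.Adj u w ∧ s(u, w) ∈ p.edges := by
  induction p with
  | nil => exact absurd rfl hne
  | @cons a m w h q ih =>
    by_cases hmw : m = w
    · subst hmw
      exact ⟨a, h, by simp⟩
    · obtain ⟨u, hu, he⟩ := ih hmw
      exact ⟨u, hu, by simp [he]⟩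

lemma support_subset_of_adj_imp {G : SimpleGraph V} {s : Finset V}
    (hG : ∀ ⦃v w : V⦄, G.Adj v w → v ∈ s) {v w : V} (p : G.Walk v w) (hv : v ∈ s) :
    ∀ x ∈ p.support, x ∈ s := by
  induction p with
  | nil => intro x hx; simp at hx; subst hx; exact hv
  | cons h q ih =>
    intro x hx
    rw [SimpleGraph.Walk.support_cons, List.mem_cons] at hx
    rcases hx with rfl | hx
    · exact hG h
    · exact ih (hG h.symm) x hx

lemma isAcyclic_of_card_le_two {G : SimpleGraph V} {s : Finset V}
    (hG : ∀ ⦃v w : V⦄, G.Adj v w → v ∈ s) (hs : s.card ≤ 2) : G.IsAcyclic := by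
  intro u c hc
  have h3 := hc.three_le_length
  have hu : u ∈ s := by
    cases c with
    | nil => simp at h3
    | cons h q => exact hG h
  have hsub : ∀ x ∈ c.support.tail, x ∈ s := fun x hx =>
    support_subset_of_adj_imp hG c hu x (List.mem_of_mem_tail hx)
  have hnd : c.support.tail.Nodup := hc.2
  have hlen : c.support.tail.length = c.length := by
    have := c.length_support
    simp only [List.length_tail, this]
    omega
  have hcard : c.support.tail.toFinset.card ≤ s.card :=
    Finset.card_le_card (fun x hx => hsub x (List.mem_toFinset.mp hx))
  rw [List.toFinset_card_of_nodup hnd, hlen] at hcard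
  omega


/-- In a path ending at `w`, there is at most one edge at `w`. -/
lemma path_unique_end_edge {T : SimpleGraph V} {v w : V} {p : T.Walk v w} (hp : p.IsPath) :
    ∀ x u, s(x, w) ∈ p.edges → s(u, w) ∈ p.edges → x = u := by
  induction p with
  | nil => simp
  | @cons a m w h q ih =>
    intro x u hx hu
    have haw : a ≠ w := fun haw => by
      rw [SimpleGraph.Walk.cons_isPath_iff] at hp
      exact hp.2 (haw ▸ q.end_mem_support)
    have key : ∀ y, s(y, w) ∈ (SimpleGraph.Walk.cons h q).edges →
        (y = a ∧ m = w) ∨ s(y, w) ∈ q.edges := by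
      intro y hy
      rw [SimpleGraph.Walk.edges_cons, List.mem_cons] at hy
      rcases hy with hy | hy
      · rw [Sym2.eq_iff] at hy
        rcases hy with ⟨h1, h2⟩ | ⟨h1, h2⟩
        · exact Or.inl ⟨h1, h2.symm⟩
        · exact absurd h2.symm haw
      · exact Or.inr hy
    have hq : q.IsPath := (SimpleGraph.Walk.cons_isPath_iff h q).mp hp |>.1
    rcases key x hx with ⟨rfl, rfl⟩ | hx'
    · rcases key u hu with ⟨rfl, _⟩ | hu'
      · rfl
      · -- q : Walk w w is a path, so nil, no edges
        exfalso
        cases q with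
        | nil => simp at hu'
        | cons h' r =>
          rw [SimpleGraph.Walk.cons_isPath_iff] at hq
          exact hq.2 r.end_mem_support
    · rcases key u hu with ⟨rfl, rfl⟩ | hu'
      · exfalso
        cases q with
        | nil => simp at hx'
        | cons h' r =>
          rw [SimpleGraph.Walk.cons_isPath_iff] at hq
          exact hq.2 r.end_mem_support
      · exact ih hq x u hx' hu'

/-- Every tree on at least two vertices has a leaf. -/
lemma IsTreeOn.exists_leaf {s : Finset V} {T : SimpleGraph V} (ht : IsTreeOn s T)
    (hs : 2 ≤ s.card) : ∃ l ∈ s, ∃ b, T.neighborSet l = {b} := by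
  classical
  -- the set of lengths of paths
  set S : Set ℕ := {k | ∃ (v w : V) (p : T.Walk v w), p.IsPath ∧ p.length = k} with hS
  have hbdd : BddAbove S := by
    refine ⟨Fintype.card V, ?_⟩
    rintro k ⟨v, w, p, hp, rfl⟩
    exact (hp.length_lt).le
  -- there is a path of length 1
  have hmem1 : (1 : ℕ) ∈ S := by
    obtain ⟨v, hv⟩ := Finset.card_pos.mp (by omega : 0 < s.card)
    obtain ⟨x, hx⟩ := ht.exists_adj hs hv
    exact ⟨v, x, SimpleGraph.Walk.cons hx SimpleGraph.Walk.nil, by simp [hx.ne], rfl⟩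
  have hne : S.Nonempty := ⟨1, hmem1⟩
  have hNmem : sSup S ∈ S := Nat.sSup_mem hne hbdd
  have hN1 : 1 ≤ sSup S := le_csSup hbdd hmem1
  obtain ⟨v, w, p, hp, hlen⟩ := hNmem
  have hvw : v ≠ w := by
    intro h; subst h
    have : p = SimpleGraph.Walk.nil := (SimpleGraph.Walk.isPath_iff_eq_nil (p := p)).mp hp
    rw [this] at hlen; simp at hlen; omega
  -- the penultimate vertex
  obtain ⟨u, hu, hue⟩ := exists_last_edge p hvw
  refine ⟨w, ht.mem_of_adj hu.symm, u, ?_⟩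
  ext x
  simp only [SimpleGraph.mem_neighborSet, Set.mem_singleton_iff]
  constructor
  · intro hx  -- x is a neighbor of w; show x = u
    by_cases hxs : x ∈ p.support
    · -- edge (w,x) would close a cycle unless x = u
      by_contra hxu
      -- consider the path from x to w inside p
      have hq : (p.dropUntil x hxs).IsPath := hp.dropUntil hxs
      have hxw : x ≠ w := fun h => (h ▸ hx).ne rfl
      have hcyc : (SimpleGraph.Walk.cons hx (p.dropUntil x hxs)).IsCycle := by
        apply SimpleGraph.Path.cons_isCycle ⟨_, hq⟩ hx
        intro hmem
        -- edge s(w,x) in dropUntil ⊆ p.edges, so x = u by uniqueness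
        have : s(x, w) ∈ p.edges := by
          have := p.edges_dropUntil_subset hxs hmem
          rwa [Sym2.eq_swap] at this
        exact hxu (path_unique_end_edge hp x u this hue)
      exact ht.2.1 _ hcyc
    · -- extend the path: contradiction with maximality
      exfalso
      have hext : (SimpleGraph.Walk.cons hx.symm p.reverse).IsPath := by
        rw [SimpleGraph.Walk.cons_isPath_iff]
        exact ⟨hp.reverse, by simpa using hxs⟩
      have : p.length + 1 ∈ S := ⟨x, v, _, hext, by simp⟩
      have := le_csSup hbdd this
      omega
  · rintro rfl; exact hu.symm
end Cayley
namespace Cayley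
open SimpleGraph
variable {V : Type*} [Fintype V] [DecidableEq V]


lemma exists_first_edge {T : SimpleGraph V} {v w : V} (p : T.Walk v w) (hne : v ≠ w) :
    ∃ u, T.Adj v u ∧ s(v, u) ∈ p.edges := by
  cases p with
  | nil => exact absurd rfl hne
  | cons h q => exact ⟨_, h, by simp⟩

/-- A path between vertices distinct from a leaf `l` avoids `l`. -/
lemma path_avoids_leaf {T : SimpleGraph V} {l b v w : V} {p : T.Walk v w} (hp : p.IsPath)
    (hleaf : T.neighborSet l = {b}) (hv : v ≠ l) (hw : w ≠ l) : l ∉ p.support := by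
  intro hmem
  have hspec := p.take_spec hmem
  obtain ⟨u, hu, hue⟩ := exists_last_edge (p.takeUntil l hmem) hv
  have hub : u = b := by
    have : u ∈ T.neighborSet l := hu.symm
    rwa [hleaf, Set.mem_singleton_iff] at this
  obtain ⟨y, hy, hye⟩ := exists_first_edge (p.dropUntil l hmem) (Ne.symm hw)
  have hyb : y = b := by
    have : y ∈ T.neighborSet l := hy
    rwa [hleaf, Set.mem_singleton_iff] at this
  have hnodup : p.edges.Nodup := hp.1.edges_nodup
  rw [← hspec, SimpleGraph.Walk.edges_append] at hnodup
  have h1 : s(l, b) ∈ (p.takeUntil l hmem).edges := by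
    rw [← hub]; rwa [Sym2.eq_swap] at hue
  have h2 : s(l, b) ∈ (p.dropUntil l hmem).edges := hyb ▸ hye
  exact List.disjoint_of_nodup_append hnodup h1 h2

lemma isAcyclic_mono {G H : SimpleGraph V} (h : G ≤ H) (hH : H.IsAcyclic) : G.IsAcyclic := by
  intro v c hc
  exact hH _ (hc.transfer (fun e he => SimpleGraph.edgeSet_mono h (c.edges_subset_edgeSet he)))

/-- Removing the edge at a leaf of a tree yields a tree on the smaller set. -/
lemma IsTreeOn.erase_leaf {s : Finset V} {T : SimpleGraph V} (ht : IsTreeOn s T)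
    {l b : V} (hls : l ∈ s) (hleaf : T.neighborSet l = {b}) :
    IsTreeOn (s.erase l) (T.deleteEdges {s(l, b)}) := by
  refine ⟨?_, isAcyclic_mono (SimpleGraph.deleteEdges_le _) ht.2.1, ?_⟩
  · intro x y hxy
    rw [SimpleGraph.deleteEdges_adj] at hxy
    refine Finset.mem_erase.mpr ⟨?_, ht.mem_of_adj hxy.1⟩
    rintro rfl
    have : y ∈ T.neighborSet x := hxy.1
    rw [hleaf, Set.mem_singleton_iff] at this
    exact hxy.2 (by rw [this]; exact Set.mem_singleton _)
  · intro v hv w hw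
    rw [Finset.mem_erase] at hv hw
    obtain ⟨p0⟩ := ht.2.2 v hv.2 w hw.2
    obtain ⟨p, hp⟩ := p0.toPath
    have hl : l ∉ p.support := path_avoids_leaf hp hleaf hv.1 hw.1
    refine ⟨p.transfer _ ?_⟩
    intro e he
    have heT : e ∈ T.edgeSet := p.edges_subset_edgeSet he
    rw [SimpleGraph.edgeSet_deleteEdges, Set.mem_diff]
    refine ⟨heT, ?_⟩
    rintro rfl
    exact hl (p.fst_mem_support_of_mem_edges he)

/-- Adding a pendant edge to a tree yields a tree. -/
lemma IsTreeOn.insert_pendant {s : Finset V} {T : SimpleGraph V} (ht : IsTreeOn s T)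
    {l b : V} (hl : l ∉ s) (hb : b ∈ s) :
    IsTreeOn (insert l s) (T ⊔ SimpleGraph.fromEdgeSet {s(l, b)}) := by
  have hlb : l ≠ b := fun h => hl (h ▸ hb)
  have hadj_lb : (T ⊔ SimpleGraph.fromEdgeSet {s(l, b)}).Adj l b := by
    right
    exact (SimpleGraph.fromEdgeSet_adj _).mpr ⟨rfl, hlb⟩
  have hadj_l : ∀ x, (T ⊔ SimpleGraph.fromEdgeSet {s(l, b)}).Adj l x → x = b := by
    intro x hx
    rcases hx with hx | hx
    · exact absurd (ht.mem_of_adj hx) hl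
    · rw [SimpleGraph.fromEdgeSet_adj, Set.mem_singleton_iff, Sym2.eq_iff] at hx
      rcases hx.1 with ⟨_, h2⟩ | ⟨h1, _⟩
      · exact h2
      · exact absurd h1 hlb
  refine ⟨?_, ?_, ?_⟩
  · intro x y hxy
    rcases hxy with hxy | hxy
    · exact Finset.mem_insert_of_mem (ht.mem_of_adj hxy)
    · rw [SimpleGraph.fromEdgeSet_adj, Set.mem_singleton_iff, Sym2.eq_iff] at hxy
      rcases hxy.1 with ⟨h1, _⟩ | ⟨h2, _⟩
      · exact h1 ▸ Finset.mem_insert_self _ _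
      · exact Finset.mem_insert_of_mem (h2 ▸ hb)
  · -- acyclicity
    intro u c hc
    by_cases hmem : l ∈ c.support
    · -- rotate the cycle to start at l
      have hc' := hc.rotate hmem
      set c' := c.rotate l hmem with hc'def
      clear_value c'
      cases hcc : c' with
      | nil => rw [hcc] at hc'; exact hc'.ne_nil rfl
      | @cons _ m _ h q =>
        have hmb : m = b := hadj_l m h
        obtain ⟨u', hu', hue⟩ := exists_last_edge q
          (fun hml => hlb ((hml ▸ hmb : l = b)))
        have hub : u' = b := hadj_l u' hu'.symm
        rw [hcc] at hc'
        have hnodup : (SimpleGraph.Walk.cons h q).edges.Nodup :=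
          hc'.isCircuit.isTrail.edges_nodup
        rw [SimpleGraph.Walk.edges_cons, List.nodup_cons] at hnodup
        apply hnodup.1
        have e1 : s(u', l) = s(l, m) := by rw [hub, hmb, Sym2.eq_swap]
        exact e1 ▸ hue
    · -- transfer cycle to T
      have hedges : ∀ e ∈ c.edges, e ∈ T.edgeSet := by
        intro e he
        have : e ∈ (T ⊔ SimpleGraph.fromEdgeSet {s(l, b)}).edgeSet := c.edges_subset_edgeSet he
        rw [SimpleGraph.edgeSet_sup] at this
        rcases this with h | h
        · exact h
        · exfalso
          rw [SimpleGraph.edgeSet_fromEdgeSet, Set.mem_diff, Set.mem_singleton_iff] at h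
          obtain ⟨rfl, -⟩ := h
          exact hmem (c.fst_mem_support_of_mem_edges he)
      exact ht.2.1 _ (hc.transfer hedges)
  · -- connectivity
    intro v hv w hw
    have key : ∀ x ∈ insert l s, (T ⊔ SimpleGraph.fromEdgeSet {s(l, b)}).Reachable x b := by
      intro x hx
      rcases Finset.mem_insert.mp hx with rfl | hx
      · exact hadj_lb.reachable
      · exact (ht.2.2 x hx b hb).mono le_sup_left
    exact (key v hv).trans (key w hw).symm
end Cayley
namespace Cayley
open SimpleGraph
variable {V : Type*} [Fintype V] [DecidableEq V]

lemma nbr_pend_self {T : SimpleGraph V} {l b : V} (hT : ∀ x, ¬T.Adj l x) (hlb : l ≠ b) :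
    (T ⊔ SimpleGraph.fromEdgeSet {s(l, b)}).neighborSet l = {b} := by
  ext z
  simp only [SimpleGraph.mem_neighborSet, SimpleGraph.sup_adj, SimpleGraph.fromEdgeSet_adj,
    Set.mem_singleton_iff, Sym2.eq_iff]
  constructor
  · rintro (h | ⟨(⟨-, rfl⟩ | ⟨h1, -⟩), hne⟩)
    · exact absurd h (hT z)
    · rfl
    · exact absurd h1 hlb
  · rintro rfl
    refine Or.inr ⟨Or.inl ?_, hlb⟩
    tauto

lemma nbr_pend_other {T : SimpleGraph V} {l b x : V} (hx : x ≠ l) (hxb : x ≠ b) :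
    (T ⊔ SimpleGraph.fromEdgeSet {s(l, b)}).neighborSet x = T.neighborSet x := by
  ext z
  simp only [SimpleGraph.mem_neighborSet, SimpleGraph.sup_adj, SimpleGraph.fromEdgeSet_adj,
    Set.mem_singleton_iff, Sym2.eq_iff]
  constructor
  · rintro (h | ⟨(⟨h1, -⟩ | ⟨h1, -⟩), -⟩)
    · exact h
    · exact absurd h1 hx
    · exact absurd h1 hxb
  · exact fun h => Or.inl h

lemma nbr_pend_base {T : SimpleGraph V} {l b : V} (hlb : l ≠ b) :
    (T ⊔ SimpleGraph.fromEdgeSet {s(l, b)}).neighborSet b = insert l (T.neighborSet b) := by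
  ext z
  simp only [SimpleGraph.mem_neighborSet, SimpleGraph.sup_adj, SimpleGraph.fromEdgeSet_adj,
    Set.mem_singleton_iff, Sym2.eq_iff, Set.mem_insert_iff]
  constructor
  · rintro (h | ⟨(⟨h1, -⟩ | ⟨-, rfl⟩), -⟩)
    · exact Or.inr h
    · exact absurd h1.symm hlb
    · exact Or.inl rfl
  · rintro (rfl | h)
    · refine Or.inr ⟨Or.inr ?_, hlb.symm⟩
      tauto
    · exact Or.inl h

lemma sup_delete_recover {T : SimpleGraph V} {l b : V} (hadj : T.Adj l b) :
    T.deleteEdges {s(l, b)} ⊔ SimpleGraph.fromEdgeSet {s(l, b)} = T := by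
  ext x y
  simp only [SimpleGraph.sup_adj, SimpleGraph.deleteEdges_adj, SimpleGraph.fromEdgeSet_adj,
    Set.mem_singleton_iff]
  constructor
  · rintro (⟨h, -⟩ | ⟨he, -⟩)
    · exact h
    · rw [Sym2.eq_iff] at he
      rcases he with ⟨rfl, rfl⟩ | ⟨rfl, rfl⟩
      · exact hadj
      · exact hadj.symm
  · intro h
    by_cases he : s(x, y) = s(l, b)
    · exact Or.inr ⟨he, h.ne⟩
    · exact Or.inl ⟨h, he⟩

lemma delete_sup_recover {T : SimpleGraph V} {l b : V} (hT : ∀ x, ¬T.Adj l x) (hlb : l ≠ b) :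
    (T ⊔ SimpleGraph.fromEdgeSet {s(l, b)}).deleteEdges {s(l, b)} = T := by
  ext x y
  simp only [SimpleGraph.sup_adj, SimpleGraph.deleteEdges_adj, SimpleGraph.fromEdgeSet_adj,
    Set.mem_singleton_iff]
  constructor
  · rintro ⟨h | ⟨he, -⟩, hne⟩
    · exact h
    · exact absurd he hne
  · intro h
    refine ⟨Or.inl h, ?_⟩
    intro he
    rw [Sym2.eq_iff] at he
    rcases he with ⟨rfl, rfl⟩ | ⟨rfl, rfl⟩
    · exact hT _ h
    · exact hT _ h.symm

/-- Transport of the leaf description along attaching a pendant edge. -/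
lemma leaf_step {s : Finset V} {T' : SimpleGraph V} {l b : V} (ht' : IsTreeOn (s.erase l) T')
    (hls : l ∈ s) (hb : b ∈ s.erase l) (h2 : 2 ≤ (s.erase l).card)
    {rest : List V} (hrest : ∀ x ∈ rest, x ∈ s.erase l)
    (hiff : ∀ v ∈ s.erase l, (IsLeaf T' v ↔ v ∉ rest)) :
    ∀ v ∈ s, (IsLeaf (T' ⊔ SimpleGraph.fromEdgeSet {s(l, b)}) v ↔ v ∉ (b :: rest)) := by
  have hno : ∀ x, ¬T'.Adj l x := fun x hx =>
    absurd (ht'.mem_of_adj hx) (Finset.notMem_erase l s)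
  obtain ⟨hbl, hbs⟩ := Finset.mem_erase.mp hb
  have hlb : l ≠ b := hbl.symm
  have hlrest : l ∉ rest := fun h => Finset.notMem_erase l s (hrest l h)
  intro v hv
  by_cases hvl : v = l
  · subst hvl
    constructor
    · intro _
      rw [List.mem_cons]
      rintro (rfl | h)
      · exact hlb rfl
      · exact hlrest h
    · intro _
      exact ⟨b, nbr_pend_self hno hlb⟩
  · by_cases hvb : v = b
    · subst hvb
      constructor
      · rintro ⟨c, hc⟩
        exfalso
        rw [nbr_pend_base hlb] at hc
        obtain ⟨x, hx⟩ := ht'.exists_adj h2 hb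
        have hxl : x ≠ l := fun h => Finset.notMem_erase l s (h ▸ ht'.mem_of_adj' hx)
        have h1 : l = c := by
          have : l ∈ ({c} : Set V) := hc ▸ Set.mem_insert _ _
          exact this
        have h2' : x = c := by
          have : x ∈ ({c} : Set V) := hc ▸ Set.mem_insert_of_mem _ hx
          exact this
        exact hxl (h2' ▸ h1.symm ▸ rfl)
      · intro h
        exact absurd (List.mem_cons_self) h
    · rw [IsLeaf, nbr_pend_other hvl hvb, List.mem_cons]
      rw [show (∃ c, T'.neighborSet v = {c}) ↔ IsLeaf T' v from Iff.rfl,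
        hiff v (Finset.mem_erase.mpr ⟨hvl, hv⟩)]
      constructor
      · intro h hh
        rcases hh with rfl | hh
        · exact hvb rfl
        · exact h hh
      · intro h hh
        exact h (Or.inr hh)
end Cayley
namespace Cayley
open SimpleGraph
variable {V : Type*} [Fintype V] [LinearOrder V]

/-- Prüfer decoding. -/
noncomputable def decode : List V → Finset V → SimpleGraph V
  | [], s => SimpleGraph.fromEdgeSet {e | ∀ v ∈ e, v ∈ s}
  | b :: rest, s =>
    if h : (s \ (b :: rest).toFinset).Nonempty then
      decode rest (s.erase ((s \ (b :: rest).toFinset).min' h)) ⊔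
        SimpleGraph.fromEdgeSet {s(((s \ (b :: rest).toFinset).min' h), b)}
    else ⊥

/-- Prüfer encoding (fuel-indexed). -/
noncomputable def encode : ℕ → SimpleGraph V → Finset V → List V
  | 0, _, _ => []
  | k + 1, T, s =>
    if h : (s.filter (fun v => IsLeaf T v)).Nonempty then
      if hb : ∃ x, T.Adj ((s.filter (fun v => IsLeaf T v)).min' h) x then
        hb.choose ::
          encode k (T.deleteEdges {s((s.filter (fun v => IsLeaf T v)).min' h, hb.choose)})
            (s.erase ((s.filter (fun v => IsLeaf T v)).min' h))
      else []
    else []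

def Valid (s : Finset V) (a : List V) : Prop :=
  a.length + 2 = s.card ∧ ∀ x ∈ a, x ∈ s

lemma decode_nil_adj {s : Finset V} {x y : V} :
    (decode [] s).Adj x y ↔ (x ∈ s ∧ y ∈ s) ∧ x ≠ y := by
  rw [decode, SimpleGraph.fromEdgeSet_adj]
  constructor
  · rintro ⟨he, hne⟩
    exact ⟨⟨he x (Sym2.mem_mk_left _ _), he y (Sym2.mem_mk_right _ _)⟩, hne⟩
  · rintro ⟨⟨hx, hy⟩, hne⟩
    refine ⟨?_, hne⟩
    intro v hv
    rcases Sym2.mem_iff.mp hv with rfl | rfl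
    · exact hx
    · exact hy

lemma decode_cons {s : Finset V} {b : V} {rest : List V}
    (h : (s \ (b :: rest).toFinset).Nonempty) :
    decode (b :: rest) s =
      decode rest (s.erase ((s \ (b :: rest).toFinset).min' h)) ⊔
        SimpleGraph.fromEdgeSet {s(((s \ (b :: rest).toFinset).min' h), b)} := by
  rw [decode, dif_pos h]

lemma encode_succ {k : ℕ} {T : SimpleGraph V} {s : Finset V} {b : V}
    (hF : (s.filter (fun v => IsLeaf T v)).Nonempty)
    (hnbr : T.neighborSet ((s.filter (fun v => IsLeaf T v)).min' hF) = {b}) :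
    encode (k + 1) T s =
      b :: encode k (T.deleteEdges {s((s.filter (fun v => IsLeaf T v)).min' hF, b)})
        (s.erase ((s.filter (fun v => IsLeaf T v)).min' hF)) := by
  set l := (s.filter (fun v => IsLeaf T v)).min' hF with hl
  have hadj : T.Adj l b := by
    have : b ∈ T.neighborSet l := by rw [hnbr]; exact rfl
    exact this
  have hex : ∃ x, T.Adj l x := ⟨b, hadj⟩
  rw [encode, dif_pos hF, dif_pos hex]
  have hch : hex.choose = b := by
    have hsp : T.Adj l hex.choose := hex.choose_spec
    have : hex.choose ∈ T.neighborSet l := hsp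
    rwa [hnbr, Set.mem_singleton_iff] at this
  rw [hch]

lemma valid_cons_sdiff {s : Finset V} {b : V} {rest : List V} (hv : Valid s (b :: rest)) :
    2 ≤ (s \ (b :: rest).toFinset).card := by
  have h1 := Finset.card_le_card_sdiff_add_card (s := s) (t := (b :: rest).toFinset)
  have h2 : (b :: rest).toFinset.card ≤ (b :: rest).length := (b :: rest).toFinset_card_le
  have h3 := hv.1
  simp only [List.length_cons] at h2 h3
  omega
end Cayley
namespace Cayley
open SimpleGraph
variable {V : Type*} [Fintype V] [LinearOrder V]

lemma min'_congr {A B : Finset V} (h : A = B) (hA : A.Nonempty) :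
    A.min' hA = B.min' (h ▸ hA) := by subst h; rfl

theorem decode_spec : ∀ (a : List V) (s : Finset V), Valid s a →
    IsTreeOn s (decode a s) ∧ (∀ v ∈ s, (IsLeaf (decode a s) v ↔ v ∉ a)) ∧
      encode a.length (decode a s) s = a := by
  intro a
  induction a with
  | nil =>
    intro s hv
    have hcard : s.card = 2 := by have h := hv.1; rw [List.length_nil] at h; omega
    obtain ⟨x, y, hxy, rfl⟩ := Finset.card_eq_two.mp hcard
    have hadj : ∀ {p q : V}, (decode [] ({x, y} : Finset V)).Adj p q →
        p ∈ ({x, y} : Finset V) := fun h => (decode_nil_adj.mp h).1.1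
    refine ⟨⟨fun p q h => hadj h, isAcyclic_of_card_le_two (fun p q h => hadj h) hcard.le, ?_⟩,
      ?_, rfl⟩
    · intro v hvm w hwm
      by_cases hvw : v = w
      · exact hvw ▸ Reachable.refl _
      · exact (decode_nil_adj.mpr ⟨⟨hvm, hwm⟩, hvw⟩).reachable
    · intro v hvm
      simp only [List.not_mem_nil, not_false_iff, iff_true]
      rcases Finset.mem_insert.mp hvm with rfl | hvm'
      · refine ⟨y, ?_⟩
        ext z
        simp only [SimpleGraph.mem_neighborSet, Set.mem_singleton_iff, decode_nil_adj]
        constructor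
        · rintro ⟨⟨-, hz⟩, hne⟩
          rcases Finset.mem_insert.mp hz with rfl | hz'
          · exact absurd rfl hne
          · exact Finset.mem_singleton.mp hz'
        · rintro rfl
          exact ⟨⟨Finset.mem_insert_self _ _, Finset.mem_insert_of_mem (Finset.mem_singleton_self _)⟩, hxy⟩
      · rw [Finset.mem_singleton] at hvm'
        subst hvm'
        refine ⟨x, ?_⟩
        ext z
        simp only [SimpleGraph.mem_neighborSet, Set.mem_singleton_iff, decode_nil_adj]
        constructor
        · rintro ⟨⟨-, hz⟩, hne⟩
          rcases Finset.mem_insert.mp hz with rfl | hz'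
          · rfl
          · exact absurd (Finset.mem_singleton.mp hz').symm hne
        · rintro rfl
          exact ⟨⟨Finset.mem_insert_of_mem (Finset.mem_singleton_self _), Finset.mem_insert_self _ _⟩, hxy.symm⟩
  | cons b rest ih =>
    intro s hv
    have hlen : rest.length + 3 = s.card := by
      have := hv.1; rw [List.length_cons] at this; omega
    have hcard2 := valid_cons_sdiff hv
    have hne : (s \ (b :: rest).toFinset).Nonempty := Finset.card_pos.mp (by omega)
    set l := (s \ (b :: rest).toFinset).min' hne with hldef
    have hlmem : l ∈ s \ (b :: rest).toFinset := hldef ▸ Finset.min'_mem _ hne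
    rw [Finset.mem_sdiff] at hlmem
    obtain ⟨hls, hlnot⟩ := hlmem
    rw [List.mem_toFinset] at hlnot
    have hlb : l ≠ b := fun h => hlnot (by rw [h]; exact List.mem_cons_self)
    have hlrest : l ∉ rest := fun h => hlnot (List.mem_cons_of_mem _ h)
    have hvalid' : Valid (s.erase l) rest := by
      constructor
      · rw [Finset.card_erase_of_mem hls]; omega
      · intro x hx
        exact Finset.mem_erase.mpr ⟨fun h => hlrest (h ▸ hx), hv.2 x (List.mem_cons_of_mem _ hx)⟩
    obtain ⟨ht', hiff', henc'⟩ := ih (s.erase l) hvalid'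
    have hbmem : b ∈ s.erase l :=
      Finset.mem_erase.mpr ⟨fun h => hlb h.symm, hv.2 b (List.mem_cons_self)⟩
    have h2' : 2 ≤ (s.erase l).card := by rw [Finset.card_erase_of_mem hls]; omega
    have hdec := decode_cons (s := s) (b := b) (rest := rest) hne
    rw [← hldef] at hdec
    have htree : IsTreeOn s (decode (b :: rest) s) := by
      rw [hdec]
      have := ht'.insert_pendant (Finset.notMem_erase l s) hbmem
      rwa [Finset.insert_erase hls] at this
    have hiff : ∀ v ∈ s, (IsLeaf (decode (b :: rest) s) v ↔ v ∉ (b :: rest)) := by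
      rw [hdec]
      exact leaf_step ht' hls hbmem h2' (fun x hx => hvalid'.2 x hx) hiff'
    refine ⟨htree, hiff, ?_⟩
    -- encoding returns the list
    set T := decode (b :: rest) s with hTdef
    have hno : ∀ x, ¬(decode rest (s.erase l)).Adj l x := fun x hx =>
      Finset.notMem_erase l s (ht'.mem_of_adj hx)
    have hfilter : s.filter (fun v => IsLeaf T v) = s \ (b :: rest).toFinset := by
      ext x
      rw [Finset.mem_filter, Finset.mem_sdiff, List.mem_toFinset]
      constructor
      · rintro ⟨hx, hleaf⟩
        exact ⟨hx, (hiff x hx).mp hleaf⟩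
      · rintro ⟨hx, hnx⟩
        exact ⟨hx, (hiff x hx).mpr hnx⟩
    have hFne : (s.filter (fun v => IsLeaf T v)).Nonempty := by
      rw [hfilter]; exact hne
    have hminF : (s.filter (fun v => IsLeaf T v)).min' hFne = l := by
      rw [hldef]
      exact min'_congr hfilter hFne
    have hnbrl : T.neighborSet l = {b} := by
      rw [hdec]
      exact nbr_pend_self hno hlb
    have hnbrl' : T.neighborSet ((s.filter (fun v => IsLeaf T v)).min' hFne) = {b} := by
      rw [hminF]; exact hnbrl
    rw [List.length_cons, encode_succ hFne hnbrl']
    congr 1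
    rw [hminF]
    have hdel : T.deleteEdges {s(l, b)} = decode rest (s.erase l) := by
      rw [hdec]
      exact delete_sup_recover hno hlb
    rw [hdel]
    exact henc'
end Cayley
namespace Cayley
open SimpleGraph
variable {V : Type*} [Fintype V] [LinearOrder V]

theorem encode_spec : ∀ (k : ℕ) (s : Finset V) (T : SimpleGraph V), IsTreeOn s T →
    s.card = k + 2 → Valid s (encode k T s) ∧ decode (encode k T s) s = T := by
  intro k
  induction k with
  | zero =>
    intro s T ht hcard
    refine ⟨⟨by simpa [encode] using hcard.symm, by simp [encode]⟩, ?_⟩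
    rw [show encode 0 T s = [] from rfl]
    obtain ⟨p, q, hpq, rfl⟩ := Finset.card_eq_two.mp hcard
    have hadjpq : T.Adj p q := by
      obtain ⟨z, hz⟩ := ht.exists_adj (by omega) (Finset.mem_insert_self p {q})
      have hzs := ht.mem_of_adj' hz
      have hzp : z ≠ p := hz.ne'
      rcases Finset.mem_insert.mp hzs with rfl | hz'
      · exact absurd rfl hzp
      · exact (Finset.mem_singleton.mp hz') ▸ hz
    ext x y
    rw [decode_nil_adj]
    constructor
    · rintro ⟨⟨hx, hy⟩, hxy⟩
      rcases Finset.mem_insert.mp hx with rfl | hx' <;>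
        rcases Finset.mem_insert.mp hy with rfl | hy'
      · exact absurd rfl hxy
      · exact (Finset.mem_singleton.mp hy') ▸ hadjpq
      · exact (Finset.mem_singleton.mp hx') ▸ hadjpq.symm
      · rw [Finset.mem_singleton.mp hx', Finset.mem_singleton.mp hy'] at hxy
        exact absurd rfl hxy
    · intro h
      exact ⟨⟨ht.mem_of_adj h, ht.mem_of_adj' h⟩, h.ne⟩
  | succ k ih =>
    intro s T ht hcard
    have h2 : 2 ≤ s.card := by omega
    obtain ⟨l0, hl0s, hl0leaf⟩ := ht.exists_leaf h2
    have hFne : (s.filter (fun v => IsLeaf T v)).Nonempty :=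
      ⟨l0, Finset.mem_filter.mpr ⟨hl0s, hl0leaf⟩⟩
    set l := (s.filter (fun v => IsLeaf T v)).min' hFne with hldef
    have hlmem : l ∈ s.filter (fun v => IsLeaf T v) := hldef ▸ Finset.min'_mem _ hFne
    rw [Finset.mem_filter] at hlmem
    obtain ⟨hls, b, hnbr⟩ := hlmem
    have hadjlb : T.Adj l b := by
      have : b ∈ T.neighborSet l := by rw [hnbr]; exact rfl
      exact this
    have hlb : l ≠ b := hadjlb.ne
    have hbs : b ∈ s := ht.mem_of_adj' hadjlb
    have hbmem : b ∈ s.erase l := Finset.mem_erase.mpr ⟨fun h => hlb h.symm, hbs⟩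
    have ht' : IsTreeOn (s.erase l) (T.deleteEdges {s(l, b)}) := ht.erase_leaf hls hnbr
    have hcard' : (s.erase l).card = k + 2 := by rw [Finset.card_erase_of_mem hls]; omega
    obtain ⟨hvalid', hdec'⟩ := ih (s.erase l) (T.deleteEdges {s(l, b)}) ht' hcard'
    set rest := encode k (T.deleteEdges {s(l, b)}) (s.erase l) with hrestdef
    have hnbr' : T.neighborSet ((s.filter (fun v => IsLeaf T v)).min' hFne) = {b} := by
      rw [← hldef]; exact hnbr
    have hencT : encode (k + 1) T s = b :: rest := by
      rw [encode_succ hFne hnbr', ← hldef]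
    have hrest_sub : ∀ x ∈ rest, x ∈ s.erase l := hvalid'.2
    have hvalid : Valid s (b :: rest) := by
      constructor
      · rw [List.length_cons]
        have := hvalid'.1
        omega
      · intro x hx
        rcases List.mem_cons.mp hx with rfl | hx'
        · exact hbs
        · exact Finset.mem_of_mem_erase (hrest_sub x hx')
    refine ⟨hencT ▸ hvalid, ?_⟩
    rw [hencT]
    -- leaf description of T
    have hiff' : ∀ v ∈ s.erase l, (IsLeaf (T.deleteEdges {s(l, b)}) v ↔ v ∉ rest) := by
      intro v hv
      have := (decode_spec rest (s.erase l) hvalid').2.1 v hv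
      rwa [hdec'] at this
    have h2' : 2 ≤ (s.erase l).card := by omega
    have hiffT0 := leaf_step ht' hls hbmem h2' hrest_sub hiff'
    rw [sup_delete_recover hadjlb] at hiffT0
    -- now unfold decode on b :: rest
    have hcard2 : 2 ≤ (s \ (b :: rest).toFinset).card := valid_cons_sdiff hvalid
    have hne : (s \ (b :: rest).toFinset).Nonempty := Finset.card_pos.mp (by omega)
    have hfilter : s.filter (fun v => IsLeaf T v) = s \ (b :: rest).toFinset := by
      ext x
      rw [Finset.mem_filter, Finset.mem_sdiff, List.mem_toFinset]
      constructor
      · rintro ⟨hx, hleaf⟩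
        exact ⟨hx, (hiffT0 x hx).mp hleaf⟩
      · rintro ⟨hx, hnx⟩
        exact ⟨hx, (hiffT0 x hx).mpr hnx⟩
    have hmin : (s \ (b :: rest).toFinset).min' hne = l := by
      rw [hldef]
      exact (min'_congr hfilter hFne).symm
    rw [decode_cons hne, hmin, hdec']
    exact sup_delete_recover hadjlb
end Cayley
namespace Cayley
open SimpleGraph
variable {V : Type*} [Fintype V] [LinearOrder V]

noncomputable def validEquiv (s : Finset V) (k : ℕ) (hk : k + 2 = s.card) :
    {a : List V // Valid s a} ≃ (Fin k → ↥s) where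
  toFun a := fun i => ⟨a.1[(i : ℕ)]'(by have := a.2.1; have := i.2; omega),
    a.2.2 _ (List.getElem_mem _)⟩
  invFun f := ⟨List.ofFn (fun i => (f i : V)), by
    refine ⟨by rw [List.length_ofFn]; omega, ?_⟩
    intro x hx
    rw [List.mem_ofFn] at hx
    obtain ⟨i, rfl⟩ := hx
    exact (f i).2⟩
  left_inv a := Subtype.ext (List.ext_getElem
    (by rw [List.length_ofFn]; have := a.2.1; omega)
    (fun i h1 h2 => by simp [List.getElem_ofFn]))
  right_inv f := funext fun i => Subtype.ext (by simp [List.getElem_ofFn])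

noncomputable def treeEquiv (s : Finset V) (k : ℕ) (hk : k + 2 = s.card) :
    {a : List V // Valid s a} ≃ {T : SimpleGraph V // IsTreeOn s T} where
  toFun a := ⟨decode a.1 s, (decode_spec a.1 s a.2).1⟩
  invFun T := ⟨encode k T.1 s, (encode_spec k s T.1 T.2 hk.symm).1⟩
  left_inv a := Subtype.ext (by
    show encode k (decode a.1 s) s = a.1
    have hlen : a.1.length = k := by have := a.2.1; omega
    rw [← hlen]
    exact (decode_spec a.1 s a.2).2.2)
  right_inv T := Subtype.ext ((encode_spec k s T.1 T.2 hk.symm).2)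

theorem card_trees (s : Finset V) (hs : 2 ≤ s.card) :
    Nat.card {T : SimpleGraph V // IsTreeOn s T} = s.card ^ (s.card - 2) := by
  have hk : (s.card - 2) + 2 = s.card := by omega
  rw [← Nat.card_congr (treeEquiv s (s.card - 2) hk),
    Nat.card_congr (validEquiv s (s.card - 2) hk), Nat.card_fun]
  congr 1
  · rw [Nat.card_eq_fintype_card, Fintype.card_coe]
  · rw [Nat.card_eq_fintype_card, Fintype.card_fin]
end Cayley

/-- **Cayley's formula.** The number of labeled spanning trees of the complete graph on
`n ≥ 1` vertices (equivalently, of labeled trees on `n` vertices) equals `n ^ (n - 2)`. -/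
theorem stmt_6 (n : ℕ) (hn : 1 ≤ n) :
    Nat.card {T : SimpleGraph (Fin n) // T ≤ (⊤ : SimpleGraph (Fin n)) ∧ T.IsTree} =
      n ^ (n - 2) := by
  rcases eq_or_lt_of_le hn with h1 | h2
  · -- n = 1
    subst h1
    have hbot : ∀ T : SimpleGraph (Fin 1), T = ⊥ := by
      intro T
      ext v w
      simp only [SimpleGraph.bot_adj, iff_false]
      intro h
      exact h.ne (Subsingleton.elim v w)
    rw [show (1 : ℕ) ^ (1 - 2) = 1 from one_pow _]
    rw [Nat.card_eq_one_iff_unique]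
    constructor
    · exact ⟨fun a b => Subtype.ext (by rw [hbot a.1, hbot b.1])⟩
    · refine ⟨⟨⊥, le_top, ⟨?_, SimpleGraph.isAcyclic_bot⟩⟩⟩
      exact ⟨fun u v => by rw [Subsingleton.elim u v]⟩
  · -- n ≥ 2
    have hcard : (Finset.univ : Finset (Fin n)).card = n := by
      rw [Finset.card_univ, Fintype.card_fin]
    have hiff : ∀ T : SimpleGraph (Fin n),
        (T ≤ (⊤ : SimpleGraph (Fin n)) ∧ T.IsTree) ↔ Cayley.IsTreeOn Finset.univ T := by
      intro T
      constructor
      · rintro ⟨-, htree⟩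
        exact ⟨fun v w _ => Finset.mem_univ v, htree.2,
          fun v _ w _ => htree.1.1 v w⟩
      · intro h
        have : Nonempty (Fin n) := ⟨⟨0, by omega⟩⟩
        exact ⟨le_top, ⟨⟨fun u v => h.2.2 u (Finset.mem_univ u) v (Finset.mem_univ v)⟩, h.2.1⟩⟩
    rw [Nat.card_congr (Equiv.subtypeEquivRight hiff)]
    rw [Cayley.card_trees Finset.univ (by omega), hcard]
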